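/- Uniform lower bound on the sum of logarithmic-mean edge values away from the degenerate corners: let φ(a,b) := lm(a,b) + lm(1 − a, 1 − b) for (a,b) ∈ [0,1]². Then for every δ ∈ (0,1) there exists c⋆ > 0 such that φ(a,b) ≥ c⋆ for all (a,b) ∈ [0,1]² with |a − b| ≤ 1 − δ. -/

import Mathlib

/-!
Each summand dominates the minimum of its arguments: the logarithmic mean lies above the
smaller argument because `log a - log b ≤ a / b - 1`. The two minima add up to `1 - |a - b|`,
so `δ` itself is a uniform lower bound.
-/

/-- Logarithmic-mean edge value: `lm a b = a` if `a = b ≥ 0`, `0` if `min a b ≤ 0`,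
and `(a - b)/(log a - log b)` otherwise. -/
noncomputable def lm (a b : ℝ) : ℝ :=
  if a = b ∧ 0 ≤ a then a
  else if min a b ≤ 0 then 0
  else (a - b) / (Real.log a - Real.log b)

open Real

lemma lm_comm (a b : ℝ) : lm a b = lm b a := by
  unfold lm
  by_cases h : a = b
  · subst h; rfl
  · simp only [h, Ne.symm h, false_and, if_false, min_comm b a, ← neg_sub a b,
      ← neg_sub (log a) (log b), neg_div_neg_eq]

lemma le_div_log_sub_log {a b : ℝ} (hb : 0 < b) (hba : b < a) :
    b ≤ (a - b) / (log a - log b) := by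
  have ha : 0 < a := hb.trans hba
  have hlog : log a - log b ≤ a / b - 1 := by
    simpa [log_div ha.ne' hb.ne'] using log_le_sub_one_of_pos (div_pos ha hb)
  rw [le_div_iff₀ (sub_pos.mpr (log_lt_log hb hba))]
  calc b * (log a - log b) ≤ b * (a / b - 1) := mul_le_mul_of_nonneg_left hlog hb.le
    _ = a - b := by field_simp

lemma min_le_lm {a b : ℝ} (ha : 0 ≤ a) (hb : 0 ≤ b) : min a b ≤ lm a b := by
  wlog hba : b ≤ a generalizing a b
  · rw [min_comm, lm_comm]
    exact this hb ha (le_of_not_ge hba)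
  rw [min_eq_right hba]
  rcases hba.eq_or_lt with rfl | hba
  · simp [lm, hb]
  rcases hb.eq_or_lt with rfl | hb
  · simp [lm, hba.ne', ha]
  simpa [lm, hba.ne', min_eq_right hba.le, hb.not_ge] using le_div_log_sub_log hb hba

lemma min_add_min_one_sub (a b : ℝ) : min a b + min (1 - a) (1 - b) = 1 - |a - b| := by
  rcases le_total a b with h | h
  · rw [min_eq_left h, min_eq_right (by linarith), abs_of_nonpos (by linarith)]; ring
  · rw [min_eq_right h, min_eq_left (by linarith), abs_of_nonneg (by linarith)]; ring

theorem lm_sum_uniform_lower_bound_general (δ : ℝ) (hδ0 : 0 < δ) :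
    ∃ cstar : ℝ, 0 < cstar ∧
      ∀ a b : ℝ, a ∈ Set.Icc (0:ℝ) 1 → b ∈ Set.Icc (0:ℝ) 1 → |a - b| ≤ 1 - δ →
        cstar ≤ lm a b + lm (1 - a) (1 - b) := by
  refine ⟨δ, hδ0, fun a b ⟨ha0, ha1⟩ ⟨hb0, hb1⟩ hab => ?_⟩
  calc δ ≤ 1 - |a - b| := by linarith
    _ = min a b + min (1 - a) (1 - b) := (min_add_min_one_sub a b).symm
    _ ≤ lm a b + lm (1 - a) (1 - b) :=
      add_le_add (min_le_lm ha0 hb0) (min_le_lm (sub_nonneg.mpr ha1) (sub_nonneg.mpr hb1))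

/-- Uniform lower bound on `φ(a,b) = lm(a,b) + lm(1-a,1-b)` away from the degenerate
corners of the unit square. -/
theorem lm_sum_uniform_lower_bound (δ : ℝ) (hδ0 : 0 < δ) (hδ1 : δ < 1) :
    ∃ cstar : ℝ, 0 < cstar ∧
      ∀ a b : ℝ, a ∈ Set.Icc (0:ℝ) 1 → b ∈ Set.Icc (0:ℝ) 1 → |a - b| ≤ 1 - δ →
        cstar ≤ lm a b + lm (1 - a) (1 - b) :=
  lm_sum_uniform_lower_bound_general δ hδ0
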